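/- arXiv:2306.08589 — 4 statements merged into one kernel-verified Lean document; each statement's English description precedes it below -/
import Mathlib

section
/- Let η be a chain of torsion classes in an abelian category A with torsionfree classes F_i = T_i^⊥. Then the function Ω_η : Obj*(A) → [0,1], M ↦ inf{ i ∈ [0,1] : M ∈ F_i }, is a weak stability condition on A. -/
open CategoryTheory CategoryTheory.Limits

universe v u

variable {C : Type u} [Category.{v} C] [Abelian C]

/-- The right Hom-orthogonal of a class of objects. -/
def Perp (T : Set C) : Set C := {Y | ∀ X ∈ T, ∀ f : X ⟶ Y, f = 0}

/-- `(T, F)` is a torsion pair: no nonzero maps from `T` to `F`, and every object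
admits a short exact sequence `0 → tX → X → fX → 0` with `tX ∈ T`, `fX ∈ F`. -/
def IsTorsionPair (T F : Set C) : Prop :=
  (∀ X ∈ T, ∀ Y ∈ F, ∀ f : X ⟶ Y, f = 0) ∧
  ∀ X : C, ∃ (A B : C) (f : A ⟶ X) (g : X ⟶ B) (w : f ≫ g = 0),
    A ∈ T ∧ B ∈ F ∧ (ShortComplex.mk f g w).ShortExact

/-- `T` is a torsion class if `(T, T^⊥)` is a torsion pair. -/
def IsTorsionClass (T : Set C) : Prop := IsTorsionPair T (Perp T)

/-- The defining condition of a weak stability condition: for every short exact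
sequence of nonzero objects, `φ(L) ≤ φ(M) ≤ φ(N)` or `φ(L) ≥ φ(M) ≥ φ(N)`. -/
def SeesawWeak (φ : C → ℝ) : Prop :=
  ∀ S : ShortComplex C, S.ShortExact →
    ¬ IsZero S.X₁ → ¬ IsZero S.X₂ → ¬ IsZero S.X₃ →
    (φ S.X₁ ≤ φ S.X₂ ∧ φ S.X₂ ≤ φ S.X₃) ∨ (φ S.X₃ ≤ φ S.X₂ ∧ φ S.X₂ ≤ φ S.X₁)

/-- A weak stability condition: valued in `[0,1]` on nonzero objects, constant on
isomorphism classes, and satisfying the weak see-saw condition. -/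
def IsWeakStability (φ : C → ℝ) : Prop :=
  (∀ X : C, ¬ IsZero X → φ X ∈ Set.Icc (0:ℝ) 1) ∧
  (∀ X Y : C, (X ≅ Y) → φ X = φ Y) ∧ SeesawWeak φ

/-- `T_{≥p}`: objects all of whose nonzero quotients `N` satisfy `φ(N) ≥ p`, together with `0`. -/
def Tge (φ : C → ℝ) (p : ℝ) : Set C :=
  {M | IsZero M ∨ ∀ (N : C) (g : M ⟶ N), Epi g → ¬ IsZero N → p ≤ φ N}

/-- `T_{>p}`: objects all of whose nonzero quotients `N` satisfy `φ(N) > p`, together with `0`. -/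
def Tgt (φ : C → ℝ) (p : ℝ) : Set C :=
  {M | IsZero M ∨ ∀ (N : C) (g : M ⟶ N), Epi g → ¬ IsZero N → p < φ N}

/-- `F_{<p}`: objects all of whose nonzero subobjects `L` satisfy `φ(L) < p`, together with `0`. -/
def Flt (φ : C → ℝ) (p : ℝ) : Set C :=
  {M | IsZero M ∨ ∀ (L : C) (f : L ⟶ M), Mono f → ¬ IsZero L → φ L < p}

/-- `F_{≤p}`: objects all of whose nonzero subobjects `L` satisfy `φ(L) ≤ p`, together with `0`. -/
def Fle (φ : C → ℝ) (p : ℝ) : Set C :=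
  {M | IsZero M ∨ ∀ (L : C) (f : L ⟶ M), Mono f → ¬ IsZero L → φ L ≤ p}

/-- `φ` is quasi-Noetherian: every strictly increasing chain of subobjects
`A₀ ⊂ A₁ ⊂ ⋯ ⊂ X` has some `n` with `φ(Aₙ) > φ(A_{n+1}/Aₙ)`. -/
def QuasiNoetherianStab (φ : C → ℝ) : Prop :=
  ∀ (X : C) (A : ℕ → Subobject X) (hA : StrictMono A),
    ∃ n : ℕ,
      φ (cokernel (Subobject.ofLE (A n) (A (n+1)) (hA (Nat.lt_succ_self n)).le)) < φ ((A n : C))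

/-- `φ` is weakly-Artinian: every strictly decreasing chain of subobjects
`X = A₀ ⊃ A₁ ⊃ ⋯` has some `n` with `φ(A_{n+1}) < φ(Aₙ/A_{n+1})`. -/
def WeaklyArtinianStab (φ : C → ℝ) : Prop :=
  ∀ (X : C) (A : ℕ → Subobject X) (hA : StrictAnti A),
    ∃ n : ℕ,
      φ ((A (n+1) : C)) < φ (cokernel (Subobject.ofLE (A (n+1)) (A n) (hA (Nat.lt_succ_self n)).le))

/-- A chain of torsion classes indexed by `[0,1]`: an order-reversing family of
torsion classes with `T 0 = A` and `T 1 = {0}`, together with the (unique)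
torsion subobject `t i M` of each object `M` with respect to `T i`. -/
structure TorsChain (C : Type u) [Category.{v} C] [Abelian C] where
  T : ℝ → Set C
  torsion : ∀ i ∈ Set.Icc (0:ℝ) 1, IsTorsionClass (T i)
  zero_eq : T 0 = Set.univ
  one_eq : T 1 = {X : C | IsZero X}
  antitone : ∀ ⦃r s : ℝ⦄, 0 ≤ r → r ≤ s → s ≤ 1 → T s ⊆ T r
  t : ℝ → ∀ M : C, Subobject M
  t_mem : ∀ i ∈ Set.Icc (0:ℝ) 1, ∀ M : C, ((t i M : C)) ∈ T i
  t_quot : ∀ i ∈ Set.Icc (0:ℝ) 1, ∀ M : C, cokernel (t i M).arrow ∈ Perp (T i)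

/-- `℧(M) = sup { i ∈ [0,1] ∣ M ∈ T i }`. -/
noncomputable def mho (T : ℝ → Set C) (M : C) : ℝ :=
  sSup {i : ℝ | i ∈ Set.Icc (0:ℝ) 1 ∧ M ∈ T i}

/-- `Ω(M) = inf { i ∈ [0,1] ∣ M ∈ (T i)^⊥ }`. -/
noncomputable def omg (T : ℝ → Set C) (M : C) : ℝ :=
  sInf {i : ℝ | i ∈ Set.Icc (0:ℝ) 1 ∧ M ∈ Perp (T i)}

/-- A chain of torsion classes is quasi-Noetherian if in every interval `(a,b)` the
chains of torsion subobjects stabilise to the right. -/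
def TorsChain.QuasiNoetherian (η : TorsChain C) : Prop :=
  ∀ a b : ℝ, 0 ≤ a → a < b → b ≤ 1 →
    ∃ s ∈ Set.Ioo a b, ∀ r ∈ Set.Ioo a b, ∀ M : C, η.t r M ≤ η.t s M

/-- A chain of torsion classes is weakly-Artinian if in every interval `(a,b)` the
chains of torsion subobjects stabilise to the left. -/
def TorsChain.WeaklyArtinian (η : TorsChain C) : Prop :=
  ∀ a b : ℝ, 0 ≤ a → a < b → b ≤ 1 →
    ∃ s ∈ Set.Ioo a b, ∀ r ∈ Set.Ioo a b, ∀ M : C, η.t s M ≤ η.t r M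

/-!
Each class `(T i)^⊥` is closed under subobjects and extensions, and these classes grow with `i`.
Hence a subobject never has larger `Ω` than the object, and a short exact sequence `0 → L → M → N → 0`
satisfies `Ω(L) ≤ Ω(M) ≤ max(Ω(L), Ω(N))`, which is exactly the weak see-saw property.
-/

lemma perp_anti {T T' : Set C} (h : T ⊆ T') : Perp T' ⊆ Perp T :=
  fun _ hY X hX f => hY X (h hX) f

lemma mem_perp_of_mono {L M : C} (f : L ⟶ M) [Mono f] {T : Set C} (hM : M ∈ Perp T) :
    L ∈ Perp T := fun X hX g => by
  rw [← cancel_mono f, zero_comp]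
  exact hM X hX (g ≫ f)

lemma mem_perp_of_shortExact {S : ShortComplex C} (hS : S.ShortExact) {T : Set C}
    (h₁ : S.X₁ ∈ Perp T) (h₃ : S.X₃ ∈ Perp T) : S.X₂ ∈ Perp T := fun X hX f => by
  have := hS.mono_f
  have hf : f ≫ S.g = 0 := h₃ X hX (f ≫ S.g)
  rw [← hS.exact.lift_f f hf, h₁ X hX (hS.exact.lift f hf), zero_comp]

lemma SeesawWeak.of_le_of_le_max {φ : C → ℝ}
    (hmono : ∀ S : ShortComplex C, S.ShortExact → φ S.X₁ ≤ φ S.X₂)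
    (hmax : ∀ S : ShortComplex C, S.ShortExact → φ S.X₂ ≤ max (φ S.X₁) (φ S.X₃)) :
    SeesawWeak φ := by
  intro S hS _ _ _
  have h₁₂ := hmono S hS
  have h₂ := hmax S hS
  rcases le_total (φ S.X₁) (φ S.X₃) with h | h
  · exact Or.inl ⟨h₁₂, h₂.trans_eq (max_eq_right h)⟩
  · exact Or.inr ⟨h.trans h₁₂, h₂.trans_eq (max_eq_left h)⟩

namespace TorsChain

variable (η : TorsChain C)

lemma mem_perp_one (M : C) : M ∈ Perp (η.T 1) := fun X hX f => by
  rw [η.one_eq] at hX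
  exact hX.eq_of_src f 0

lemma perp_mono {r s : ℝ} (hr : 0 ≤ r) (hrs : r ≤ s) (hs : s ≤ 1) :
    Perp (η.T r) ⊆ Perp (η.T s) :=
  perp_anti (η.antitone hr hrs hs)

lemma omg_set_nonempty (M : C) : {i : ℝ | i ∈ Set.Icc (0:ℝ) 1 ∧ M ∈ Perp (η.T i)}.Nonempty :=
  ⟨1, ⟨zero_le_one, le_rfl⟩, η.mem_perp_one M⟩

lemma omg_set_bddBelow (M : C) : BddBelow {i : ℝ | i ∈ Set.Icc (0:ℝ) 1 ∧ M ∈ Perp (η.T i)} :=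
  ⟨0, fun _ hi => hi.1.1⟩

lemma omg_le_of_mem_perp {M : C} {j : ℝ} (hj : j ∈ Set.Icc (0:ℝ) 1) (hM : M ∈ Perp (η.T j)) :
    omg η.T M ≤ j :=
  csInf_le (η.omg_set_bddBelow M) ⟨hj, hM⟩

lemma omg_mem_Icc (M : C) : omg η.T M ∈ Set.Icc (0:ℝ) 1 :=
  ⟨le_csInf (η.omg_set_nonempty M) fun _ hi => hi.1.1,
    η.omg_le_of_mem_perp ⟨zero_le_one, le_rfl⟩ (η.mem_perp_one M)⟩

lemma mem_perp_of_omg_lt {M : C} {j : ℝ} (hj : omg η.T M < j) (hj1 : j ≤ 1) :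
    M ∈ Perp (η.T j) := by
  obtain ⟨i, ⟨⟨hi0, _⟩, hM⟩, hij⟩ := exists_lt_of_csInf_lt (η.omg_set_nonempty M) hj
  exact η.perp_mono hi0 hij.le hj1 hM

lemma omg_le_omg_of_mem_perp {M N : C}
    (h : ∀ i ∈ Set.Icc (0:ℝ) 1, M ∈ Perp (η.T i) → N ∈ Perp (η.T i)) :
    omg η.T N ≤ omg η.T M :=
  csInf_le_csInf (η.omg_set_bddBelow N) (η.omg_set_nonempty M) fun i hi => ⟨hi.1, h i hi.1 hi.2⟩

lemma omg_le_of_mono {L M : C} (f : L ⟶ M) [Mono f] : omg η.T L ≤ omg η.T M :=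
  η.omg_le_omg_of_mem_perp fun _ _ => mem_perp_of_mono f

lemma omg_congr {X Y : C} (e : X ≅ Y) : omg η.T X = omg η.T Y :=
  le_antisymm (η.omg_le_of_mono e.hom) (η.omg_le_of_mono e.inv)

lemma omg_le_max_of_shortExact {S : ShortComplex C} (hS : S.ShortExact) :
    omg η.T S.X₂ ≤ max (omg η.T S.X₁) (omg η.T S.X₃) := by
  refine le_of_forall_gt_imp_ge_of_dense fun j hj => ?_
  rcases le_or_gt j 1 with hj1 | hj1
  · have h₁ := η.mem_perp_of_omg_lt ((le_max_left _ _).trans_lt hj) hj1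
    have h₃ := η.mem_perp_of_omg_lt ((le_max_right _ _).trans_lt hj) hj1
    have hj0 : 0 ≤ j := (η.omg_mem_Icc S.X₁).1.trans ((le_max_left _ _).trans hj.le)
    exact η.omg_le_of_mem_perp ⟨hj0, hj1⟩ (mem_perp_of_shortExact hS h₁ h₃)
  · exact (η.omg_mem_Icc S.X₂).2.trans hj1.le

end TorsChain

/-- `Ω_η` is a weak stability condition on `A`. -/
theorem omg_isWeakStability (η : TorsChain C) :
    IsWeakStability (fun M : C => omg η.T M) :=
  ⟨fun X _ => η.omg_mem_Icc X, fun _ _ e => η.omg_congr e,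
    SeesawWeak.of_le_of_le_max (fun S hS => have := hS.mono_f; η.omg_le_of_mono S.f)
      fun _ hS => η.omg_le_max_of_shortExact hS⟩
end

section
/- Let A be an abelian category, η = (T_i) a chain of torsion classes that is quasi-Noetherian, and (a,b) ⊆ [0,1] an interval. Then the union ∪_{r ∈ (a,b)} T_r is a torsion class in A, with torsionfree class ∩_{r ∈ (a,b)} T_r^⊥. -/
open CategoryTheory CategoryTheory.Limits

universe v u

variable {C : Type u} [Category.{v} C] [Abelian C]

/-!
Choose `s ∈ (a,b)` whose torsion subobjects dominate those of every `r ∈ (a,b)`. For every `M`,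
`0 → t_s M → M → M / t_s M → 0` is the required sequence: `M / t_s M` is `T_s`-torsionfree, so its
`t_s` vanishes, hence so does its `t_r ≤ t_s`, which makes it `T_r`-torsionfree for every `r ∈ (a,b)`.
-/

theorem biInter_perp_eq_perp_biUnion {ι : Type*} (I : Set ι) (T : ι → Set C) :
    ⋂ i ∈ I, Perp (T i) = Perp (⋃ i ∈ I, T i) := by
  ext Y
  simp only [Set.mem_iInter, Perp, Set.mem_ofPred_eq, Set.mem_iUnion]
  exact ⟨fun hY X ⟨i, hi, hX⟩ => hY i hi X hX, fun hY i hi X hX => hY X ⟨i, hi, hX⟩⟩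

namespace TorsChain

variable (η : TorsChain C) {i : ℝ}

theorem t_arrow_eq_zero_of_mem_perp (hi : i ∈ Set.Icc (0 : ℝ) 1) {N : C}
    (hN : N ∈ Perp (η.T i)) : (η.t i N).arrow = 0 :=
  hN _ (η.t_mem i hi N) _

theorem mem_perp_of_t_arrow_eq_zero (hi : i ∈ Set.Icc (0 : ℝ) 1) {N : C}
    (h : (η.t i N).arrow = 0) : N ∈ Perp (η.T i) := by
  intro X hX f
  have := cokernel.π_of_zero h
  simpa using η.t_quot i hi N X hX (f ≫ cokernel.π _)

theorem mem_perp_of_t_le (hi : i ∈ Set.Icc (0 : ℝ) 1) {s : ℝ} (hs : s ∈ Set.Icc (0 : ℝ) 1)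
    {N : C} (hle : η.t i N ≤ η.t s N) (hN : N ∈ Perp (η.T s)) : N ∈ Perp (η.T i) := by
  refine η.mem_perp_of_t_arrow_eq_zero hi ?_
  rw [← Subobject.ofLE_arrow hle, η.t_arrow_eq_zero_of_mem_perp hs hN, comp_zero]

end TorsChain

/-- For a quasi-Noetherian chain of torsion classes and an interval `(a,b) ⊆ [0,1]`,
`(⋃_{r ∈ (a,b)} T_r, ⋂_{r ∈ (a,b)} T_r^⊥)` is a torsion pair. -/
theorem union_isTorsionPair (η : TorsChain C) (hη : η.QuasiNoetherian)
    (a b : ℝ) (ha : 0 ≤ a) (hab : a < b) (hb : b ≤ 1) :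
    IsTorsionPair (⋃ r ∈ Set.Ioo a b, η.T r) (⋂ r ∈ Set.Ioo a b, Perp (η.T r)) := by
  obtain ⟨s, hs, hts⟩ := hη a b ha hab hb
  have hIcc : ∀ r ∈ Set.Ioo a b, r ∈ Set.Icc (0 : ℝ) 1 :=
    fun r hr => ⟨ha.trans hr.1.le, hr.2.le.trans hb⟩
  refine ⟨fun X hX Y hY => ?_, fun M => ?_⟩
  · rw [biInter_perp_eq_perp_biUnion] at hY
    exact hY X hX
  · have hquot : cokernel (η.t s M).arrow ∈ ⋂ r ∈ Set.Ioo a b, Perp (η.T r) :=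
      Set.mem_iInter₂.2 fun r hr =>
        η.mem_perp_of_t_le (hIcc r hr) (hIcc s hs) (hts r hr _) (η.t_quot s (hIcc s hs) M)
    exact ⟨_, _, (η.t s M).arrow, cokernel.π _, cokernel.condition _,
      Set.mem_biUnion hs (η.t_mem s (hIcc s hs) M), hquot, ⟨ShortComplex.exact_cokernel _⟩⟩
end

section
/- Let A be an abelian category, η = (T_i) a chain of torsion classes that is weakly-Artinian, and (a,b) ⊆ [0,1] an interval. Then the intersection ∩_{r ∈ (a,b)} T_r is a torsion class in A, with torsionfree class ∪_{r ∈ (a,b)} T_r^⊥. -/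
/-!
Choose `s ∈ (a,b)` at which the torsion subobjects `t_r X`, `r ∈ (a,b)`, are smallest. For
`r ≥ s` the chain is antitone, so `t_r X ≤ t_s X ≤ t_r X`, i.e. `t_s X = t_r X ∈ T_r`; for
`r ≤ s` simply `t_s X ∈ T_s ⊆ T_r`. Hence `0 → t_s X → X → X / t_s X → 0` has its left term in
`⋂ T_r` and its right term in `T_s^⊥ ⊆ ⋃ T_r^⊥`.
-/

open CategoryTheory CategoryTheory.Limits

universe v u

variable {C : Type u} [Category.{v} C] [Abelian C]

lemma hom_eq_zero_of_mem_iInter_of_mem_iUnion_perp {ι : Type*} (T : ι → Set C) (p : ι → Prop)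
    {X Y : C} (hX : X ∈ ⋂ i, ⋂ (_ : p i), T i) (hY : Y ∈ ⋃ i, ⋃ (_ : p i), Perp (T i))
    (f : X ⟶ Y) : f = 0 := by
  obtain ⟨i, hi, hYi⟩ := Set.mem_iUnion₂.1 hY
  exact hYi X (Set.mem_iInter₂.1 hX i hi) f

lemma shortExact_arrow_cokernel {M : C} (N : Subobject M) :
    (ShortComplex.mk N.arrow (cokernel.π N.arrow) (cokernel.condition _)).ShortExact :=
  ShortComplex.ShortExact.mk'
    (ShortComplex.exact_of_g_is_cokernel _ (cokernelIsCokernel _)) inferInstance inferInstance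

lemma IsTorsionPair.of_subobject {T F : Set C} (hTF : ∀ X ∈ T, ∀ Y ∈ F, ∀ f : X ⟶ Y, f = 0)
    (h : ∀ X : C, ∃ N : Subobject X, (N : C) ∈ T ∧ cokernel N.arrow ∈ F) :
    IsTorsionPair T F := by
  refine ⟨hTF, fun X => ?_⟩
  obtain ⟨N, hNT, hNF⟩ := h X
  exact ⟨N, _, N.arrow, cokernel.π _, cokernel.condition _, hNT, hNF,
    shortExact_arrow_cokernel N⟩

namespace TorsChain

variable (η : TorsChain C)

lemma le_t_of_mem {i : ℝ} (hi : i ∈ Set.Icc (0:ℝ) 1) {M : C}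
    (N : Subobject M) (hN : (N : C) ∈ η.T i) : N ≤ η.t i M := by
  have hz : N.arrow ≫ cokernel.π (η.t i M).arrow = 0 := η.t_quot i hi M _ hN _
  exact Subobject.le_of_comm (Abelian.monoLift _ _ hz) (Abelian.monoLift_comp _ _ hz)

lemma t_antitone {r s : ℝ} (hr : 0 ≤ r) (hrs : r ≤ s) (hs : s ≤ 1) (M : C) :
    η.t s M ≤ η.t r M :=
  η.le_t_of_mem ⟨hr, hrs.trans hs⟩ _ (η.antitone hr hrs hs (η.t_mem s ⟨hr.trans hrs, hs⟩ M))

lemma t_mem_of_t_le {r s : ℝ} (hr : r ∈ Set.Icc (0:ℝ) 1) (hs : s ∈ Set.Icc (0:ℝ) 1) {M : C}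
    (hle : η.t s M ≤ η.t r M) : (η.t s M : C) ∈ η.T r := by
  rcases le_total r s with hrs | hsr
  · exact η.antitone hr.1 hrs hs.2 (η.t_mem s hs M)
  · rw [le_antisymm hle (η.t_antitone hs.1 hsr hr.2 M)]
    exact η.t_mem r hr M

end TorsChain

/-- For a weakly-Artinian chain of torsion classes and an interval `(a,b) ⊆ [0,1]`,
`(⋂_{r ∈ (a,b)} T_r, ⋃_{r ∈ (a,b)} T_r^⊥)` is a torsion pair. -/
theorem inter_isTorsionPair (η : TorsChain C) (hη : η.WeaklyArtinian)
    (a b : ℝ) (ha : 0 ≤ a) (hab : a < b) (hb : b ≤ 1) :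
    IsTorsionPair (⋂ r ∈ Set.Ioo a b, η.T r) (⋃ r ∈ Set.Ioo a b, Perp (η.T r)) := by
  refine IsTorsionPair.of_subobject
    (fun X hX Y hY => hom_eq_zero_of_mem_iInter_of_mem_iUnion_perp _ _ hX hY) fun X => ?_
  obtain ⟨s, hs, hmin⟩ := hη a b ha hab hb
  have hsIcc : s ∈ Set.Icc (0:ℝ) 1 := ⟨ha.trans hs.1.le, hs.2.le.trans hb⟩
  refine ⟨η.t s X, Set.mem_iInter₂.2 fun r hr => ?_,
    Set.mem_iUnion₂.2 ⟨s, hs, η.t_quot s hsIcc X⟩⟩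
  exact η.t_mem_of_t_le ⟨ha.trans hr.1.le, hr.2.le.trans hb⟩ hsIcc (hmin r hr X)
end

section
/- Let φ be a quasi-Noetherian, weakly-Artinian weak stability condition on an abelian category A. Then for every nonzero object M, ℧(η⁺_φ)(M) ≤ φ(M) ≤ Ω(η⁻_φ)(M), where η⁺_φ(s) = {X : φ(N) ≥ s for all nonzero quotients N of X} ∪ {0}, η⁻_φ(s) = {X : φ(N) > s for all nonzero quotients N of X} ∪ {0}, ℧_η(M) = sup{i : M ∈ T_i}, and Ω_η(M) = inf{i : M ∈ T_i^⊥}. -/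
/-!
The lower bound `℧(η⁺_φ)(M) ≤ φ(M)` is immediate: if `M ∈ T_{≥s}` then, `M` being a quotient of
itself, `s ≤ φ(M)`.

For the upper bound, suppose `M ∈ T_{>b}^⊥` but `b < φ(M)`. Any nonzero subobject `A ⊆ M` with
`b < φ(A)` is not in `T_{>b}` (its inclusion into `M` would vanish), so it has a nonzero quotient
`A/B` with `φ(A/B) ≤ b`; the see-saw property then forces `B ≠ 0` and `b < φ(B)`. Iterating from
`A = M` gives a strictly decreasing chain `A₀ ⊃ A₁ ⊃ ⋯` with `φ(A_{n+1}) > b ≥ φ(Aₙ/A_{n+1})`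
for all `n`, which weak Artinianity forbids.
-/

open CategoryTheory CategoryTheory.Limits

universe v u

variable {C : Type u} [Category.{v} C] [Abelian C]

/-- The paper's `η⁺_φ`, extended by `A` for `s ≤ 0` and by `{0}` for `1 ≤ s`. -/
def etaPlus (φ : C → ℝ) (s : ℝ) : Set C :=
  if s ≤ 0 then Set.univ else if 1 ≤ s then {X : C | IsZero X} else Tge φ s

/-- The paper's `η⁻_φ`, extended by `A` for `s ≤ 0` and by `{0}` for `1 ≤ s`. -/
def etaMinus (φ : C → ℝ) (s : ℝ) : Set C :=
  if s ≤ 0 then Set.univ else if 1 ≤ s then {X : C | IsZero X} else Tgt φ s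

lemma mho_etaPlus_le {D : Type*} [Category D] {φ : D → ℝ} {M : D} (hM : ¬ IsZero M)
    (hφM : 0 ≤ φ M) :
    mho (etaPlus φ) M ≤ φ M := by
  refine Real.sSup_le (fun s ⟨_, hs⟩ => ?_) hφM
  unfold etaPlus at hs
  split_ifs at hs with h₀ h₁
  · linarith
  · exact absurd hs hM
  · exact hs.elim (absurd · hM) fun hs => hs M (𝟙 M) inferInstance hM

lemma Subobject.exists_cokernel_ofLE_iso {M N : C} (A : Subobject M) (g : (A : C) ⟶ N) [Epi g] :
    ∃ (B : Subobject M) (h : B ≤ A), Nonempty (cokernel (Subobject.ofLE B A h) ≅ N) := by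
  refine ⟨Subobject.mk (kernel.ι g ≫ A.arrow), Subobject.mk_le_of_comm _ rfl, ⟨?_⟩⟩
  have hofLE : Subobject.ofLE _ A (Subobject.mk_le_of_comm _ rfl) =
      (Subobject.underlyingIso (kernel.ι g ≫ A.arrow)).hom ≫ kernel.ι g := by
    simp [← cancel_mono A.arrow]
  rw [hofLE]
  exact cokernelEpiComp _ _ ≪≫ IsColimit.coconePointUniqueUpToIso (cokernelIsCokernel _)
    (Abelian.epiIsCokernelOfKernel _ (kernelIsKernel g))

lemma Subobject.cokernelSequence_ofLE_shortExact {M : C} {A B : Subobject M} (h : B ≤ A) :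
    (ShortComplex.cokernelSequence (Subobject.ofLE B A h)).ShortExact :=
  .mk' (ShortComplex.cokernelSequence_exact _) (inferInstanceAs (Mono (Subobject.ofLE B A h)))
    inferInstance

lemma SeesawWeak.not_isZero_X₁_and_lt {φ : C → ℝ} (hiso : ∀ X Y : C, (X ≅ Y) → φ X = φ Y)
    (hss : SeesawWeak φ) {S : ShortComplex C} (hS : S.ShortExact) {b : ℝ}
    (h₂ : ¬ IsZero S.X₂) (h₃ : ¬ IsZero S.X₃) (hb : b < φ S.X₂) (h₃b : φ S.X₃ ≤ b) :
    ¬ IsZero S.X₁ ∧ b < φ S.X₁ := by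
  have h₁ : ¬ IsZero S.X₁ := fun h₁ => by
    have : IsIso S.g := hS.isIso_g_iff.mpr h₁
    linarith [hiso _ _ (asIso S.g)]
  refine ⟨h₁, ?_⟩
  rcases hss S hS h₁ h₂ h₃ with ⟨-, h⟩ | ⟨-, h⟩ <;> linarith

lemma exists_lt_of_notMem_Tgt {φ : C → ℝ} (hiso : ∀ X Y : C, (X ≅ Y) → φ X = φ Y)
    (hss : SeesawWeak φ) {M : C} {A : Subobject M} {b : ℝ} (hA : ¬ IsZero (A : C))
    (hb : b < φ A) (hAb : (A : C) ∉ Tgt φ b) :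
    ∃ (B : Subobject M) (h : B < A), (¬ IsZero (B : C) ∧ b < φ B) ∧
      φ (cokernel (Subobject.ofLE B A h.le)) ≤ b := by
  simp only [Tgt, Set.mem_ofPred_eq, not_or, not_forall, not_lt] at hAb
  obtain ⟨-, N, g, _, hN, hNb⟩ := hAb
  obtain ⟨B, hBA, ⟨e⟩⟩ := Subobject.exists_cokernel_ofLE_iso A g
  have hcok : ¬ IsZero (cokernel (Subobject.ofLE B A hBA)) := fun h => hN (h.of_iso e.symm)
  have hcokb : φ (cokernel (Subobject.ofLE B A hBA)) ≤ b := hiso _ _ e ▸ hNb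
  have hlt : B < A := hBA.lt_of_ne fun hBA' => by
    subst hBA'
    exact hcok (by simpa using isZero_cokernel_of_epi (𝟙 (B : C)))
  exact ⟨B, hlt, hss.not_isZero_X₁_and_lt hiso
    (Subobject.cokernelSequence_ofLE_shortExact hBA) hA hcok hb hcokb, hcokb⟩

lemma WeaklyArtinianStab.not_of_forall_exists_lt {φ : C → ℝ} (hwa : WeaklyArtinianStab φ)
    {M : C} {b : ℝ} (P : Subobject M → Prop) (hP : ∀ A, P A → b < φ A)
    (hstep : ∀ A, P A → ∃ (B : Subobject M) (h : B < A), P B ∧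
      φ (cokernel (Subobject.ofLE B A h.le)) ≤ b)
    (A : Subobject M) : ¬ P A := fun hA => by
  choose next hlt hnext hcok using hstep
  let chain (n : ℕ) : {A // P A} :=
    Nat.rec ⟨A, hA⟩ (fun _ A => ⟨next A.1 A.2, hnext A.1 A.2⟩) n
  have hanti : StrictAnti fun n => (chain n).1 :=
    strictAnti_nat_of_succ_lt fun n => hlt (chain n).1 (chain n).2
  obtain ⟨n, hn⟩ := hwa M _ hanti
  have h₁ : b < φ (chain (n + 1)).1 := hP _ (chain (n + 1)).2
  have h₂ : φ (cokernel (Subobject.ofLE (chain (n + 1)).1 (chain n).1 (hanti n.lt_succ_self).le))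
      ≤ b := hcok (chain n).1 (chain n).2
  linarith

lemma le_of_mem_perp_Tgt {φ : C → ℝ} (hiso : ∀ X Y : C, (X ≅ Y) → φ X = φ Y)
    (hss : SeesawWeak φ) (hwa : WeaklyArtinianStab φ) {M : C} {b : ℝ} (hM : ¬ IsZero M)
    (hperp : M ∈ Perp (Tgt φ b)) : φ M ≤ b := by
  by_contra! hb
  let e : ((⊤ : Subobject M) : C) ≅ M := asIso (⊤ : Subobject M).arrow
  refine hwa.not_of_forall_exists_lt (fun A => ¬ IsZero (A : C) ∧ b < φ A) (fun _ => And.right)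
    (fun A ⟨hA, hAb⟩ => exists_lt_of_notMem_Tgt hiso hss hA hAb fun hAT => ?_) ⊤
    ⟨fun h => hM (h.of_iso e.symm), hiso _ _ e ▸ hb⟩
  exact hA (IsZero.of_mono_eq_zero A.arrow (hperp _ hAT A.arrow))

lemma le_omg_etaMinus {φ : C → ℝ} {M : C} (hM : ¬ IsZero M) (hφM : φ M ≤ 1)
    (hperp : ∀ b, 0 < b → b < 1 → M ∈ Perp (Tgt φ b) → φ M ≤ b) :
    φ M ≤ omg (etaMinus φ) M := by
  have hone : (1 : ℝ) ∈ {i | i ∈ Set.Icc (0 : ℝ) 1 ∧ M ∈ Perp (etaMinus φ i)} :=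
    ⟨⟨zero_le_one, le_rfl⟩, fun X hX f => by
      simp only [etaMinus, if_neg one_pos.not_ge, if_pos le_rfl] at hX
      exact hX.eq_of_src f 0⟩
  refine le_csInf ⟨1, hone⟩ fun b ⟨_, hb⟩ => ?_
  unfold etaMinus at hb
  split_ifs at hb with h₀ h₁
  · exact absurd ((IsZero.iff_id_eq_zero M).mpr (hb M trivial (𝟙 M))) hM
  · linarith
  · exact hperp b (by linarith) (by linarith) hb

theorem mho_etaPlus_le_le_omg_etaMinus_general (φ : C → ℝ) (hφ : IsWeakStability φ)
    (hwa : WeaklyArtinianStab φ)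
    (M : C) (hM : ¬ IsZero M) :
    mho (fun s : ℝ => if s ≤ 0 then Set.univ
      else if 1 ≤ s then {X : C | IsZero X} else Tge φ s) M ≤ φ M ∧
    φ M ≤ omg (fun s : ℝ => if s ≤ 0 then Set.univ
      else if 1 ≤ s then {X : C | IsZero X} else Tgt φ s) M := by
  obtain ⟨hval, hiso, hss⟩ := hφ
  exact ⟨mho_etaPlus_le hM (hval M hM).1, le_omg_etaMinus hM (hval M hM).2
    fun _ _ _ => le_of_mem_perp_Tgt hiso hss hwa hM⟩

/-- For a quasi-Noetherian, weakly-Artinian weak stability condition `φ` and every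
nonzero `M`: `℧(η⁺_φ)(M) ≤ φ(M) ≤ Ω(η⁻_φ)(M)`. -/
theorem mho_etaPlus_le_le_omg_etaMinus (φ : C → ℝ) (hφ : IsWeakStability φ)
    (hqn : QuasiNoetherianStab φ) (hwa : WeaklyArtinianStab φ)
    (M : C) (hM : ¬ IsZero M) :
    mho (fun s : ℝ => if s ≤ 0 then Set.univ
      else if 1 ≤ s then {X : C | IsZero X} else Tge φ s) M ≤ φ M ∧
    φ M ≤ omg (fun s : ℝ => if s ≤ 0 then Set.univ
      else if 1 ≤ s then {X : C | IsZero X} else Tgt φ s) M :=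
  mho_etaPlus_le_le_omg_etaMinus_general φ hφ hwa M hM
end
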